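/- Let P₁ be the gamma distribution with shape α₁ > 0 and scale β₁ > 0, and P₂ the gamma distribution with shape α₂ > 0 and scale β₂ > 0, and suppose the means are equal: α₁β₁ = α₂β₂. Then D(P₁‖P₂) ≤ (α₁ − α₂)² / (2·min(α₁, α₂)²). -/

import Mathlib

open MeasureTheory Real Set

/-- The gamma distribution with shape `α` and scale `β`: the measure on `ℝ` with density
`x ^ (α - 1) * exp (-x / β) / (Γ α * β ^ α)` on `(0, ∞)`. -/
noncomputable def gammaDist (α β : ℝ) : Measure ℝ :=
  volume.withDensity fun x =>
    ENNReal.ofReal (if x ∈ Set.Ioi (0 : ℝ) then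
      x ^ (α - 1) * Real.exp (-x / β) / (Real.Gamma α * β ^ α) else 0)

/-- Kullback–Leibler divergence `D(P‖Q) = ∫ log (dP/dQ) dP`. -/
noncomputable def klDiv (P Q : Measure ℝ) : ℝ :=
  ∫ x, Real.log (P.rnDeriv Q x).toReal ∂P

/-! Write `F s = log Γ(s) - s log s + s`, so that `F' = ψ - log`. The log-likelihood ratio of two
gamma laws is affine in `log x` and `x`, and `E[log X] = ψ(α) + log β`, `E[X] = αβ`; when the means
agree this turns `D(P₁‖P₂)` into the Bregman divergence `F α₂ - F α₁ - F' α₁ (α₂ - α₁)`.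
The function `ψ x - log x + 1 / x` is decreasing: its unit-step differences
`log x - log (x + 1) + 1 / (x + 1)` are increasing and it tends to `0` at infinity, by the bounds
`log x - 1 / x ≤ ψ x ≤ log x` coming from the convexity of `log Γ`. Hence, with `m = min α₁ α₂`,
`F' v - F' u ≤ 1 / u - 1 / v ≤ (v - u) / m²` for `m ≤ u ≤ v`, and this one-sided Lipschitz bound
on `F'` bounds the Bregman divergence by `(α₁ - α₂)² / (2 m²)`. -/

open Filter Topology

theorem antitoneOn_Ioi_of_monotoneOn_sub_of_tendsto {φ : ℝ → ℝ} {a L : ℝ}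
    (hstep : MonotoneOn (fun x => φ (x + 1) - φ x) (Ioi a))
    (hlim : ∀ x ∈ Ioi a, Tendsto (fun n : ℕ => φ (x + n)) atTop (𝓝 L)) :
    AntitoneOn φ (Ioi a) := by
  intro u (hu : a < u) v (hv : a < v) huv
  have key (n : ℕ) : φ v - φ u ≤ φ (v + n) - φ (u + n) := by
    induction n with
    | zero => simp
    | succ n ih =>
      have hn := hstep (lt_add_of_lt_of_nonneg hu n.cast_nonneg)
        (lt_add_of_lt_of_nonneg hv n.cast_nonneg) (by linarith)
      push_cast
      simp only [← add_assoc] at hn ⊢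
      linarith
  have hdiff := (hlim v hv).sub (hlim u hu)
  rw [sub_self] at hdiff
  exact sub_nonpos.1 (ge_of_tendsto' hdiff key)

theorem monotoneOn_log_sub_log_add_one_add_inv :
    MonotoneOn (fun x => Real.log x - Real.log (x + 1) + (x + 1)⁻¹) (Ioi 0) := by
  intro x (hx : 0 < x) y (hy : 0 < y) hxy
  have hlog : (y - x) / ((x + 1) * y) ≤ log ((x + 1) * y / (x * (y + 1))) := by
    refine le_trans (le_of_eq ?_) (one_sub_inv_le_log_of_pos (by positivity))
    field_simp
    ring
  have hfrac : (x + 1)⁻¹ - (y + 1)⁻¹ ≤ (y - x) / ((x + 1) * y) := by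
    rw [inv_sub_inv (by positivity) (by positivity),
      div_le_div_iff₀ (by positivity) (by positivity)]
    nlinarith
  rw [log_div (by positivity) (by positivity), log_mul (by positivity) hy.ne',
    log_mul hx.ne' (by positivity)] at hlog
  dsimp only
  linarith

theorem le_tangent_add_sq_of_deriv_sub_le {f f' : ℝ → ℝ} {s : Set ℝ} [s.OrdConnected] {L a b : ℝ}
    (hf : ∀ x ∈ s, HasDerivAt f (f' x) x)
    (hf' : ∀ u ∈ s, ∀ v ∈ s, u ≤ v → f' v - f' u ≤ L * (v - u)) (ha : a ∈ s) (hb : b ∈ s) :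
    f b ≤ f a + f' a * (b - a) + L / 2 * (b - a) ^ 2 := by
  set g : ℝ → ℝ := fun t => f t - f' a * (t - a) - L / 2 * (t - a) ^ 2
  have hg : ∀ t ∈ s, HasDerivAt g (f' t - f' a - L * (t - a)) t := fun t ht => by
    refine (((hf t ht).sub (((hasDerivAt_id t).sub_const a).const_mul (f' a))).sub
      ((((hasDerivAt_id t).sub_const a).pow 2).const_mul (L / 2))).congr_deriv ?_
    norm_num
    ring
  have hcont {c d : ℝ} (hc : c ∈ s) (hd : d ∈ s) : ContinuousOn g (Icc c d) := fun t ht =>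
    (hg t (Set.OrdConnected.out' hc hd ht)).continuousAt.continuousWithinAt
  have hderiv {c d : ℝ} (hc : c ∈ s) (hd : d ∈ s) : ∀ t ∈ interior (Icc c d),
      HasDerivWithinAt g (f' t - f' a - L * (t - a)) (interior (Icc c d)) t :=
    fun t ht => (hg t (Set.OrdConnected.out' hc hd (interior_subset ht))).hasDerivWithinAt
  suffices g b ≤ g a by simp only [g] at this; linarith
  rcases le_total a b with hab | hba
  · refine antitoneOn_of_hasDerivWithinAt_nonpos (convex_Icc a b) (hcont ha hb) (hderiv ha hb)
      (fun t ht => ?_) (left_mem_Icc.2 hab) (right_mem_Icc.2 hab) hab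
    rw [interior_Icc] at ht
    have := hf' a ha t (Set.OrdConnected.out' ha hb (Ioo_subset_Icc_self ht)) ht.1.le
    linarith
  · refine monotoneOn_of_hasDerivWithinAt_nonneg (convex_Icc b a) (hcont hb ha) (hderiv hb ha)
      (fun t ht => ?_) (left_mem_Icc.2 hba) (right_mem_Icc.2 hba) hba
    rw [interior_Icc] at ht
    have := hf' t (Set.OrdConnected.out' hb ha (Ioo_subset_Icc_self ht)) a ha ht.2.le
    linarith

namespace Real

noncomputable def digamma : ℝ → ℝ := logDeriv Gamma

theorem differentiableAt_Gamma_of_pos {x : ℝ} (hx : 0 < x) : DifferentiableAt ℝ Gamma x :=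
  differentiableAt_Gamma fun m => ((neg_nonpos.2 m.cast_nonneg).trans_lt hx).ne'

theorem hasDerivAt_log_Gamma {x : ℝ} (hx : 0 < x) :
    HasDerivAt (fun y => log (Gamma y)) (digamma x) x :=
  (differentiableAt_Gamma_of_pos hx).hasDerivAt.log (Gamma_pos_of_pos hx).ne'

theorem log_Gamma_add_one {x : ℝ} (hx : 0 < x) : log (Gamma (x + 1)) = log (Gamma x) + log x := by
  rw [Gamma_add_one hx.ne', log_mul hx.ne' (Gamma_pos_of_pos hx).ne', add_comm]

theorem digamma_add_one {x : ℝ} (hx : 0 < x) : digamma (x + 1) = digamma x + x⁻¹ := by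
  have hshift : HasDerivAt (fun y => log (Gamma (y + 1))) (digamma (x + 1)) x :=
    (hasDerivAt_log_Gamma (by linarith)).comp_add_const x 1
  have hsum : HasDerivAt (fun y => log (Gamma (y + 1))) (digamma x + x⁻¹) x := by
    refine ((hasDerivAt_log_Gamma hx).add (hasDerivAt_log hx.ne')).congr_of_eventuallyEq ?_
    filter_upwards [eventually_gt_nhds hx] with y hy using log_Gamma_add_one hy
  exact hshift.unique hsum

theorem digamma_le_log {x : ℝ} (hx : 0 < x) : digamma x ≤ log x := by
  have h := convexOn_log_Gamma.le_slope_of_hasDerivAt (mem_Ioi.2 hx)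
    (mem_Ioi.2 (by linarith : 0 < x + 1)) (lt_add_one x) (hasDerivAt_log_Gamma hx)
  rwa [slope_def_field, Function.comp_apply, Function.comp_apply, log_Gamma_add_one hx,
    add_sub_cancel_left, add_sub_cancel_left, div_one] at h

theorem log_sub_inv_le_digamma {x : ℝ} (hx : 0 < x) : log x - x⁻¹ ≤ digamma x := by
  have h := convexOn_log_Gamma.slope_le_of_hasDerivAt (mem_Ioi.2 hx)
    (mem_Ioi.2 (by linarith : 0 < x + 1)) (lt_add_one x) (hasDerivAt_log_Gamma (by linarith))
  rw [slope_def_field, Function.comp_apply, Function.comp_apply, log_Gamma_add_one hx,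
    add_sub_cancel_left, add_sub_cancel_left, div_one, digamma_add_one hx] at h
  linarith

theorem antitoneOn_digamma_sub_log_add_inv :
    AntitoneOn (fun x => digamma x - log x + x⁻¹) (Ioi 0) := by
  refine antitoneOn_Ioi_of_monotoneOn_sub_of_tendsto (L := 0)
    (monotoneOn_log_sub_log_add_one_add_inv.congr fun x (hx : 0 < x) => ?_) fun x (hx : 0 < x) => ?_
  · simp only [digamma_add_one hx]
    ring
  · have hinv : Tendsto (fun n : ℕ => (x + n)⁻¹) atTop (𝓝 0) :=
      tendsto_inv_atTop_zero.comp (tendsto_atTop_add_const_left _ x tendsto_natCast_atTop_atTop)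
    refine tendsto_of_tendsto_of_tendsto_of_le_of_le tendsto_const_nhds hinv (fun n => ?_)
      fun n => ?_
    · have := log_sub_inv_le_digamma (by positivity : 0 < x + n)
      dsimp only
      linarith
    · have := digamma_le_log (by positivity : 0 < x + n)
      dsimp only
      linarith

theorem digamma_sub_log_sub_le {u v : ℝ} (hu : 0 < u) (huv : u ≤ v) :
    (digamma v - log v) - (digamma u - log u) ≤ u⁻¹ - v⁻¹ := by
  have := antitoneOn_digamma_sub_log_add_inv hu (hu.trans_le huv : 0 < v) huv
  dsimp only at this
  linarith

theorem hasDerivAt_log_Gamma_sub_mul_log_add {x : ℝ} (hx : 0 < x) :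
    HasDerivAt (fun s => log (Gamma s) - s * log s + s) (digamma x - log x) x := by
  refine (((hasDerivAt_log_Gamma hx).sub (hasDerivAt_mul_log hx.ne')).add
    (hasDerivAt_id x)).congr_deriv ?_
  ring

theorem log_Gamma_sub_mul_log_add_le {m a b : ℝ} (hm : 0 < m) (ha : m ≤ a) (hb : m ≤ b) :
    log (Gamma b) - b * log b + b ≤ log (Gamma a) - a * log a + a + (digamma a - log a) * (b - a) +
      (b - a) ^ 2 / (2 * m ^ 2) := by
  have hdesc := le_tangent_add_sq_of_deriv_sub_le (s := Ici m) (L := (m ^ 2)⁻¹)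
    (fun x (hx : m ≤ x) => hasDerivAt_log_Gamma_sub_mul_log_add (hm.trans_le hx))
    (fun u (hu : m ≤ u) v (hv : m ≤ v) huv => ?_) ha hb
  · convert hdesc using 2
    ring
  · have hu0 := hm.trans_le hu
    have hv0 := hm.trans_le hv
    calc (digamma v - log v) - (digamma u - log u) ≤ u⁻¹ - v⁻¹ := digamma_sub_log_sub_le hu0 huv
      _ = (v - u) / (u * v) := by field_simp
      _ ≤ (v - u) / m ^ 2 :=
        div_le_div_of_nonneg_left (by linarith) (by positivity) (by nlinarith)
      _ = (m ^ 2)⁻¹ * (v - u) := by ring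

theorem hasDerivAt_Gamma_eq_integral {a : ℝ} (ha : 0 < a) :
    HasDerivAt Gamma (∫ t in Ioi 0, exp (-t) * t ^ (a - 1) * log t) a := by
  have hC : HasDerivAt Complex.Gamma
      (∫ t : ℝ in Ioi 0, (t : ℂ) ^ ((a : ℂ) - 1) * (log t * exp (-t))) a := by
    refine (Complex.hasDerivAt_GammaIntegral (by simpa using ha)).congr_of_eventuallyEq ?_
    filter_upwards [(isOpen_lt continuous_const Complex.continuous_re).mem_nhds
      (by simpa using ha : (0 : ℝ) < (a : ℂ).re)] with s hs using Complex.Gamma_eq_integral hs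
  have hint : ∫ t : ℝ in Ioi 0, (t : ℂ) ^ ((a : ℂ) - 1) * (log t * exp (-t))
      = ((∫ t in Ioi 0, exp (-t) * t ^ (a - 1) * log t : ℝ) : ℂ) := by
    rw [← integral_complex_ofReal]
    refine setIntegral_congr_fun measurableSet_Ioi fun t (ht : 0 < t) => ?_
    rw [← Complex.ofReal_one, ← Complex.ofReal_sub, ← Complex.ofReal_cpow ht.le]
    push_cast
    ring
  rw [hint] at hC
  simpa [Complex.Gamma_ofReal] using hC.real_of_complex

theorem abs_log_le_rpow_add_rpow_neg {x ε : ℝ} (hx : 0 < x) (hε : 0 < ε) :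
    |log x| ≤ (x ^ ε + x ^ (-ε)) / ε := by
  have hpos := log_le_rpow_div hx.le hε
  have hneg := log_le_rpow_div (inv_pos.2 hx).le hε
  rw [log_inv, inv_rpow hx.le, ← rpow_neg hx.le] at hneg
  have h1 : 0 ≤ x ^ ε / ε := by positivity
  have h2 : 0 ≤ x ^ (-ε) / ε := by positivity
  rw [add_div]
  exact abs_le.2 ⟨by linarith, by linarith⟩

theorem integrableOn_exp_neg_mul_rpow_mul_log {a : ℝ} (ha : 0 < a) :
    IntegrableOn (fun t => exp (-t) * t ^ (a - 1) * log t) (Ioi 0) := by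
  have hdom := ((GammaIntegral_convergent (by linarith : 0 < a + a / 2)).add
    (GammaIntegral_convergent (by linarith : 0 < a - a / 2))).div_const (a / 2)
  refine hdom.mono' (by fun_prop) ((ae_restrict_iff' measurableSet_Ioi).2 (ae_of_all _ ?_))
  intro t (ht : 0 < t)
  rw [norm_mul, norm_of_nonneg (by positivity), norm_eq_abs, Pi.add_apply,
    show a + a / 2 - 1 = (a - 1) + a / 2 by ring, show a - a / 2 - 1 = (a - 1) + -(a / 2) by ring,
    rpow_add ht, rpow_add ht]
  calc exp (-t) * t ^ (a - 1) * |log t|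
      ≤ exp (-t) * t ^ (a - 1) * ((t ^ (a / 2) + t ^ (-(a / 2))) / (a / 2)) := by
        gcongr; exact abs_log_le_rpow_add_rpow_neg ht (by positivity)
    _ = _ := by ring

end Real

noncomputable def gammaDensity (α β x : ℝ) : ℝ :=
  if x ∈ Ioi (0 : ℝ) then x ^ (α - 1) * exp (-x / β) / (Gamma α * β ^ α) else 0

theorem gammaDist_eq_withDensity (α β : ℝ) :
    gammaDist α β = volume.withDensity fun x => ENNReal.ofReal (gammaDensity α β x) := rfl

theorem measurable_gammaDensity (α β : ℝ) : Measurable (gammaDensity α β) :=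
  Measurable.ite measurableSet_Ioi (by fun_prop) measurable_const

theorem gammaDensity_of_pos {α β x : ℝ} (hx : 0 < x) :
    gammaDensity α β x = x ^ (α - 1) * exp (-x / β) / (Gamma α * β ^ α) :=
  if_pos hx

theorem gammaDensity_of_nonpos {α β x : ℝ} (hx : x ≤ 0) : gammaDensity α β x = 0 :=
  if_neg hx.not_gt

instance (α β : ℝ) : SigmaFinite (gammaDist α β) := SigmaFinite.withDensity_ofReal _

theorem integral_gammaDist {α β : ℝ} (hα : 0 < α) (hβ : 0 < β) (g : ℝ → ℝ) :
    ∫ x, g x ∂gammaDist α β = (Gamma α)⁻¹ * ∫ y in Ioi 0, exp (-y) * y ^ (α - 1) * g (β * y) := by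
  have hΓ := Gamma_pos_of_pos hα
  have hind : (fun x => (ENNReal.ofReal (gammaDensity α β x)).toReal • g x) =
      (Ioi 0).indicator fun x => gammaDensity α β x * g x := by
    ext x
    rcases lt_or_ge 0 x with hx | hx
    · rw [indicator_of_mem (mem_Ioi.2 hx), gammaDensity_of_pos hx,
        ENNReal.toReal_ofReal (by positivity), smul_eq_mul]
    · simp [gammaDensity_of_nonpos hx, indicator_of_notMem (notMem_Ioi.2 hx)]
  have hscale := integral_comp_mul_left_Ioi' (fun x => gammaDensity α β x * g x) 0 hβ
  rw [mul_zero] at hscale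
  rw [gammaDist_eq_withDensity, integral_withDensity_eq_integral_toReal_smul
    (measurable_gammaDensity α β).ennreal_ofReal (ae_of_all _ fun _ => ENNReal.ofReal_lt_top),
    hind, integral_indicator measurableSet_Ioi, ← hscale, smul_eq_mul, ← integral_const_mul,
    ← integral_const_mul]
  refine setIntegral_congr_fun measurableSet_Ioi fun y (hy : 0 < y) => ?_
  rw [gammaDensity_of_pos (by positivity), mul_rpow hβ.le hy.le, neg_div,
    mul_div_cancel_left₀ _ hβ.ne', rpow_sub_one hβ.ne']
  field_simp

theorem integral_gammaDist_affine_log {α β : ℝ} (hα : 0 < α) (hβ : 0 < β) (A B C : ℝ) :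
    ∫ x, (A * log x + B * x + C) ∂gammaDist α β = A * (digamma α + log β) + B * (α * β) + C := by
  have hΓ := Gamma_pos_of_pos hα
  have hk := (GammaIntegral_convergent hα).const_mul (A * log β + C)
  have hk' := (GammaIntegral_convergent (by linarith : 0 < α + 1)).const_mul (B * β)
  have hl := (integrableOn_exp_neg_mul_rpow_mul_log hα).const_mul A
  have hsplit : ∫ y in Ioi 0, exp (-y) * y ^ (α - 1) * (A * log (β * y) + B * (β * y) + C) =
      A * (∫ y in Ioi 0, exp (-y) * y ^ (α - 1) * log y) +
        B * β * (∫ y in Ioi 0, exp (-y) * y ^ (α + 1 - 1)) +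
        (A * log β + C) * ∫ y in Ioi 0, exp (-y) * y ^ (α - 1) := by
    rw [← integral_const_mul, ← integral_const_mul, ← integral_const_mul, ← integral_add hl hk',
      ← integral_add (hl.fun_add hk') hk]
    refine setIntegral_congr_fun measurableSet_Ioi fun y (hy : 0 < y) => ?_
    rw [log_mul hβ.ne' hy.ne', add_sub_cancel_right, rpow_sub_one hy.ne']
    field_simp
    ring
  rw [integral_gammaDist hα hβ, hsplit, ← Gamma_eq_integral hα, ← Gamma_eq_integral (by linarith),
    ← (hasDerivAt_Gamma_eq_integral hα).deriv, Gamma_add_one hα.ne', digamma, logDeriv_apply]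
  field_simp
  ring

theorem klDiv_eq_integral_of_eq_withDensity_exp {P Q : Measure ℝ} [SigmaFinite Q] {ℓ : ℝ → ℝ}
    (hℓ : Measurable ℓ) (hPQ : P = Q.withDensity fun x => ENNReal.ofReal (exp (ℓ x))) :
    klDiv P Q = ∫ x, ℓ x ∂P := by
  have hrn := Measure.rnDeriv_withDensity Q hℓ.exp.ennreal_ofReal
  rw [← hPQ] at hrn
  have hac : P ≪ Q := hPQ ▸ withDensity_absolutelyContinuous _ _
  refine integral_congr_ae ?_
  filter_upwards [hac.ae_le hrn] with x hx
  rw [hx, ENNReal.toReal_ofReal (exp_pos _).le, log_exp]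

theorem gammaDist_eq_withDensity_exp {α₁ β₁ α₂ β₂ : ℝ} (hα₁ : 0 < α₁) (hβ₁ : 0 < β₁)
    (hα₂ : 0 < α₂) (hβ₂ : 0 < β₂) :
    gammaDist α₁ β₁ = (gammaDist α₂ β₂).withDensity fun x => ENNReal.ofReal
      (exp ((α₁ - α₂) * log x + (β₂⁻¹ - β₁⁻¹) * x +
        log (Gamma α₂ * β₂ ^ α₂ / (Gamma α₁ * β₁ ^ α₁)))) := by
  have hC₁ : 0 < Gamma α₁ * β₁ ^ α₁ := by have := Gamma_pos_of_pos hα₁; positivity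
  have hC₂ : 0 < Gamma α₂ * β₂ ^ α₂ := by have := Gamma_pos_of_pos hα₂; positivity
  rw [gammaDist_eq_withDensity, gammaDist_eq_withDensity, ← withDensity_mul _
    (measurable_gammaDensity α₂ β₂).ennreal_ofReal (by fun_prop)]
  congr 1
  funext x
  rw [Pi.mul_apply, ← ENNReal.ofReal_mul' (exp_pos _).le]
  congr 1
  rcases lt_or_ge 0 x with hx | hx
  · have hpow : x ^ (α₁ - 1) = x ^ (α₂ - 1) * exp ((α₁ - α₂) * log x) := by
      rw [mul_comm _ (log x), ← rpow_def_of_pos hx, ← rpow_add hx]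
      ring_nf
    have hexp : exp (-x / β₁) = exp (-x / β₂) * exp ((β₂⁻¹ - β₁⁻¹) * x) := by
      rw [← exp_add]
      congr 1
      field_simp
      ring
    rw [gammaDensity_of_pos hx, gammaDensity_of_pos hx, exp_add, exp_add, exp_log (by positivity),
      hpow, hexp]
    field_simp
  · simp [gammaDensity_of_nonpos hx]

theorem klDiv_gammaDist_gammaDist {α₁ β₁ α₂ β₂ : ℝ} (hα₁ : 0 < α₁) (hβ₁ : 0 < β₁) (hα₂ : 0 < α₂)
    (hβ₂ : 0 < β₂) :
    klDiv (gammaDist α₁ β₁) (gammaDist α₂ β₂) = (α₁ - α₂) * digamma α₁ - log (Gamma α₁) +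
      log (Gamma α₂) + α₂ * (log β₂ - log β₁) + α₁ * (β₁ / β₂ - 1) := by
  have hΓ₁ := Gamma_pos_of_pos hα₁
  have hΓ₂ := Gamma_pos_of_pos hα₂
  rw [klDiv_eq_integral_of_eq_withDensity_exp (by fun_prop)
    (gammaDist_eq_withDensity_exp hα₁ hβ₁ hα₂ hβ₂), integral_gammaDist_affine_log hα₁ hβ₁,
    log_div (by positivity) (by positivity), log_mul hΓ₂.ne' (by positivity),
    log_mul hΓ₁.ne' (by positivity), log_rpow hβ₁, log_rpow hβ₂]
  field_simp
  ring

theorem klDiv_gamma_gamma_same_mean_le (α₁ β₁ α₂ β₂ : ℝ) (hα₁ : 0 < α₁) (hβ₁ : 0 < β₁)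
    (hα₂ : 0 < α₂) (hβ₂ : 0 < β₂) (hmean : α₁ * β₁ = α₂ * β₂) :
    klDiv (gammaDist α₁ β₁) (gammaDist α₂ β₂) ≤ (α₁ - α₂) ^ 2 / (2 * min α₁ α₂ ^ 2) := by
  have hβ₂_eq : β₂ = α₁ * β₁ / α₂ := by field_simp; linarith
  have hlog : log β₂ - log β₁ = log α₁ - log α₂ := by
    rw [hβ₂_eq, log_div (by positivity) hα₂.ne', log_mul hα₁.ne' hβ₁.ne']
    ring
  have hratio : α₁ * (β₁ / β₂ - 1) = α₂ - α₁ := by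
    rw [hβ₂_eq]
    field_simp
  have hbound := log_Gamma_sub_mul_log_add_le (lt_min hα₁ hα₂) (min_le_left α₁ α₂)
    (min_le_right α₁ α₂)
  rw [klDiv_gammaDist_gammaDist hα₁ hβ₁ hα₂ hβ₂, hlog, hratio, sub_sq_comm]
  linarith
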